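/- arXiv:2310.12983 — 2 statements merged into one kernel-verified Lean document; each statement's English description precedes it below -/
import Mathlib

section
/- Let f be a social choice function for m ≥ 2 candidates satisfying Pareto optimality (PO) and reducibility to subsocieties (RS). Let n ≥ 2 and suppose f(Q) = Maj(Q) for every profile Q of length n−1. If P is a profile of length n with a clear leader, i.e., there exists a candidate k* such that Σ_{k*}(P) > Σ_k(P) for every candidate k ≠ k*, then f(P) = some k*. -/
/-- A voting profile for `m` candidates: a finite list of ballots, where a ballot
is `none` (abstention) or `some k` (a vote for candidate `k : Fin m`). -/
abbrev Profile (m : ℕ) := List (Option (Fin m))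

/-- `votes P k` is the number of ballots in `P` for candidate `k` (Σ_k(P)). -/
def votes {m : ℕ} (P : Profile m) (k : Fin m) : ℕ := P.count (some k)

/-- Anonymity (A): the outcome is invariant under permutations of the voters. -/
def Anonymous {m : ℕ} (f : Profile m → Option (Fin m)) : Prop :=
  ∀ P P' : Profile m, P.Perm P' → f P = f P'

/-- Neutrality (N): relabelling the candidates by a permutation relabels the outcome. -/
def Neutral {m : ℕ} (f : Profile m → Option (Fin m)) : Prop :=
  ∀ (τ : Equiv.Perm (Fin m)) (P : Profile m),
    f (P.map (Option.map τ)) = Option.map τ (f P)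

/-- Duel property (DP): if every ballot is an abstention or a vote for `i` or `j`,
then the outcome is a tie or a win of `i` or `j`. -/
def DuelProperty {m : ℕ} (f : Profile m → Option (Fin m)) : Prop :=
  ∀ (i j : Fin m) (P : Profile m),
    (∀ b ∈ P, b = none ∨ b = some i ∨ b = some j) →
    (f P = none ∨ f P = some i ∨ f P = some j)

/-- Pareto optimality (PO): if candidate `k` receives at least one vote and all other
candidates receive none, then `k` wins. -/
def ParetoOptimal {m : ℕ} (f : Profile m → Option (Fin m)) : Prop :=
  ∀ (P : Profile m) (k : Fin m),
    0 < votes P k → (∀ l : Fin m, l ≠ k → votes P l = 0) → f P = some k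

/-- Reducibility to subsocieties (RS): for every profile with at least 2 voters,
the outcome equals the outcome on the profile of outcomes of all subsocieties
obtained by removing one voter. -/
def Reducible {m : ℕ} (f : Profile m → Option (Fin m)) : Prop :=
  ∀ P : Profile m, 2 ≤ P.length →
    f P = f (List.ofFn fun l : Fin P.length => f (P.eraseIdx (l : ℕ)))

/-- The majority rule: `some k*` if `k*` has strictly more votes than every other
candidate, and `none` (a tie) otherwise. -/
noncomputable def Maj {m : ℕ} (P : Profile m) : Option (Fin m) :=
  if h : ∃ k : Fin m, ∀ l : Fin m, l ≠ k → votes P l < votes P k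
  then some h.choose else none

/-!
Apply (RS) to `P`: each subsociety `P` minus one ballot has `n - 1` voters, so its outcome is
its majority winner. Removing one ballot changes each tally by at most one, so no candidate
other than `k` can lead a subsociety; hence every outcome is a tie or `k`. Some subsociety is
won by `k`: drop a ballot not cast for `k`, or any ballot if all are for `k`. Then (PO)
applied to the profile of outcomes elects `k`.
-/

def IsStrictLeader {m : ℕ} (P : Profile m) (k : Fin m) : Prop :=
  ∀ l : Fin m, l ≠ k → votes P l < votes P k

section Leader

variable {m : ℕ} {P : Profile m} {j k : Fin m}

lemma votes_eq_votes_eraseIdx_add {i : ℕ} (hi : i < P.length) (l : Fin m) :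
    votes P l = votes (P.eraseIdx i) l + if P[i] = some l then 1 else 0 := by
  rw [votes, votes, ← (List.getElem_cons_eraseIdx_perm hi).count_eq, List.count_cons]
  simp

lemma IsStrictLeader.unique (hj : IsStrictLeader P j) (hk : IsStrictLeader P k) : j = k := by
  by_contra hne
  have := hj k (Ne.symm hne)
  have := hk j hne
  omega

lemma Maj_eq_some_iff : Maj P = some k ↔ IsStrictLeader P k := by
  unfold Maj
  split
  case isTrue h =>
    rw [Option.some_inj]
    exact ⟨fun e => e ▸ h.choose_spec, fun hk => IsStrictLeader.unique h.choose_spec hk⟩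
  case isFalse h =>
    exact ⟨nofun, fun hk => absurd ⟨k, hk⟩ h⟩

lemma isStrictLeader_replicate {r : ℕ} (hr : 0 < r) :
    IsStrictLeader (List.replicate r (some k)) k := by
  intro l hl
  simp [votes, List.count_replicate, Ne.symm hl, hr]

lemma IsStrictLeader.eraseIdx_of_ne (hk : IsStrictLeader P k) {i : ℕ} (hi : i < P.length)
    (hne : P[i] ≠ some k) : IsStrictLeader (P.eraseIdx i) k := by
  intro l hl
  have hl' := votes_eq_votes_eraseIdx_add hi l
  have hk' := votes_eq_votes_eraseIdx_add hi k
  have := hk l hl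
  rw [if_neg hne] at hk'
  split at hl' <;> omega

lemma IsStrictLeader.eq_of_eraseIdx (hk : IsStrictLeader P k) {i : ℕ} (hi : i < P.length)
    (hj : IsStrictLeader (P.eraseIdx i) j) : j = k := by
  by_contra hne
  have hj' := votes_eq_votes_eraseIdx_add hi j
  have hk' := votes_eq_votes_eraseIdx_add hi k
  have := hk j hne
  have := hj k (Ne.symm hne)
  split at hj' <;> split at hk' <;> omega

lemma IsStrictLeader.Maj_eraseIdx (hk : IsStrictLeader P k) {i : ℕ} (hi : i < P.length) :
    Maj (P.eraseIdx i) = none ∨ Maj (P.eraseIdx i) = some k := by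
  rcases h : Maj (P.eraseIdx i) with _ | j
  · exact .inl rfl
  · exact .inr (congrArg some (hk.eq_of_eraseIdx hi (Maj_eq_some_iff.mp h)))

lemma IsStrictLeader.exists_Maj_eraseIdx (hk : IsStrictLeader P k) (hP : 2 ≤ P.length) :
    ∃ i, ∃ _ : i < P.length, Maj (P.eraseIdx i) = some k := by
  by_cases hall : ∀ b ∈ P, b = some k
  · have hrep : P = List.replicate P.length (some k) := List.eq_replicate_iff.mpr ⟨rfl, hall⟩
    refine ⟨0, by omega, Maj_eq_some_iff.mpr ?_⟩
    rw [hrep, List.eraseIdx_replicate, if_pos (by omega)]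
    exact isStrictLeader_replicate (by omega)
  · obtain ⟨b, hb, hne⟩ := not_forall₂.mp hall
    obtain ⟨i, hi, rfl⟩ := List.getElem_of_mem hb
    exact ⟨i, hi, Maj_eq_some_iff.mpr (hk.eraseIdx_of_ne hi hne)⟩

end Leader

lemma ParetoOptimal.eq_some {m : ℕ} {f : Profile m → Option (Fin m)} (hPO : ParetoOptimal f)
    {Q : Profile m} {k : Fin m} (hmem : some k ∈ Q) (hQ : ∀ b ∈ Q, b = none ∨ b = some k) :
    f Q = some k := by
  refine hPO Q k (List.count_pos_iff.mpr hmem) fun l hl => List.count_eq_zero.mpr fun hl' => ?_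
  rcases hQ _ hl' with h | h
  · exact Option.some_ne_none l h
  · exact hl (Option.some_injective _ h)

theorem stmt_7_general (m : ℕ) (f : Profile m → Option (Fin m))
    (hPO : ParetoOptimal f) (hRS : Reducible f)
    (n : ℕ) (hn : 2 ≤ n)
    (hInd : ∀ Q : Profile m, Q.length = n - 1 → f Q = Maj Q)
    (P : Profile m) (hP : P.length = n)
    (k : Fin m) (hlead : ∀ l : Fin m, l ≠ k → votes P l < votes P k) :
    f P = some k := by
  have hk : IsStrictLeader P k := hlead
  have hsub : ∀ (i : ℕ) (hi : i < P.length), f (P.eraseIdx i) = Maj (P.eraseIdx i) :=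
    fun i hi => hInd _ (by rw [List.length_eraseIdx_of_lt hi, hP])
  rw [hRS P (hP ▸ hn)]
  apply hPO.eq_some
  · obtain ⟨i, hi, hMaj⟩ := hk.exists_Maj_eraseIdx (hP ▸ hn)
    exact List.mem_ofFn.mpr ⟨⟨i, hi⟩, (hsub i hi).trans hMaj⟩
  · intro b hb
    obtain ⟨⟨i, hi⟩, rfl⟩ := List.mem_ofFn.mp hb
    rw [hsub i hi]
    exact hk.Maj_eraseIdx hi

/-- clear leader case: under (PO), (RS) and the inductive hypothesis
that `f` agrees with `Maj` on all profiles of length `n - 1`, any profile of length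
`n` with a clear leader `k*` elects `k*`. -/
theorem stmt_7 (m : ℕ) (hm : 2 ≤ m) (f : Profile m → Option (Fin m))
    (hPO : ParetoOptimal f) (hRS : Reducible f)
    (n : ℕ) (hn : 2 ≤ n)
    (hInd : ∀ Q : Profile m, Q.length = n - 1 → f Q = Maj Q)
    (P : Profile m) (hP : P.length = n)
    (k : Fin m) (hlead : ∀ l : Fin m, l ≠ k → votes P l < votes P k) :
    f P = some k :=
  stmt_7_general m f hPO hRS n hn hInd P hP k hlead
end

section
/- For m ≥ 2, the social choice function f1 defined by f1(P) = none if all ballots of P are abstentions, and f1(P) = some k* where k* is the smallest candidate index with Σ_{k*}(P) > 0 otherwise, satisfies reducibility to subsocieties (RS). -/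
/-- The rule `f1`: `none` if all ballots are abstentions, and otherwise the smallest
candidate index receiving at least one vote. -/
noncomputable def f1 {m : ℕ} (P : Profile m) : Option (Fin m) :=
  if h : ∃ k : Fin m, 0 < votes P k
  then some ((Finset.univ.filter fun k : Fin m => 0 < votes P k).min'
      ⟨h.choose, Finset.mem_filter.mpr ⟨Finset.mem_univ _, h.choose_spec⟩⟩)
  else none

/-!
`f1 P` is the least candidate occurring in `P`. Every subsociety `P ∖ {l}` is a sublist of `P`,
so its winner (if any) occurs in `P` and is at least `f1 P`; and since `P` has two voters, some
removal keeps a ballot for `f1 P`, which then wins that subsociety. Hence the least candidate of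
the profile of subsociety outcomes is again `f1 P`, and when nobody in `P` votes, nobody votes in
any subsociety either.
-/

lemma List.exists_mem_eraseIdx {α : Type*} {l : List α} {a : α} (ha : a ∈ l)
    (hl : 2 ≤ l.length) : ∃ k : Fin l.length, a ∈ l.eraseIdx k := by
  obtain ⟨i, hi, rfl⟩ := List.mem_iff_getElem.1 ha
  refine ⟨⟨if i = 0 then 1 else 0, by split_ifs <;> omega⟩,
    List.mem_eraseIdx_iff_getElem.2 ⟨i, hi, ?_, rfl⟩⟩
  dsimp only
  split_ifs <;> omega

section f1

variable {m : ℕ}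

lemma f1_eq_none_iff (P : Profile m) : f1 P = none ↔ ∀ k, some k ∉ P := by
  simp [f1, votes, List.count_pos_iff]

lemma f1_eq_some_iff (P : Profile m) (k : Fin m) :
    f1 P = some k ↔ IsLeast {j | some j ∈ P} k := by
  have hvotes : {j | some j ∈ P} = ↑(Finset.univ.filter fun j : Fin m => 0 < votes P j) := by
    ext j
    simp [votes, List.count_pos_iff]
  unfold f1
  split_ifs with h
  · rw [Option.some_inj, hvotes]
    exact ⟨fun hk => hk ▸ Finset.isLeast_min' _ _, (Finset.isLeast_min' _ _).unique⟩
  · simp only [false_iff]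
    exact fun hk => h ⟨k, List.count_pos_iff.2 hk.1⟩

lemma mem_of_f1_eq_some {P : Profile m} {k : Fin m} (h : f1 P = some k) : some k ∈ P :=
  ((f1_eq_some_iff P k).1 h).1

lemma f1_eq_none_of_subset {P Q : Profile m} (hQP : Q ⊆ P) (h : f1 P = none) :
    f1 Q = none :=
  (f1_eq_none_iff Q).2 fun k hk => (f1_eq_none_iff P).1 h k (hQP hk)

lemma f1_eq_some_of_subset {P Q : Profile m} {k : Fin m} (hQP : Q ⊆ P) (h : f1 P = some k)
    (hkQ : some k ∈ Q) : f1 Q = some k :=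
  (f1_eq_some_iff Q k).2 ⟨hkQ, fun _ hj => ((f1_eq_some_iff P k).1 h).2 (hQP hj)⟩

end f1

theorem stmt_12_general (m : ℕ) : Reducible (f1 (m := m)) := by
  intro P hP
  have hsub : ∀ l : ℕ, P.eraseIdx l ⊆ P := fun l => (P.eraseIdx_sublist l).subset
  cases hf : f1 P with
  | none =>
    refine ((f1_eq_none_iff _).2 fun k hk => ?_).symm
    obtain ⟨l, hl⟩ := List.mem_ofFn.1 hk
    simp [f1_eq_none_of_subset (hsub l) hf] at hl
  | some k =>
    refine ((f1_eq_some_iff _ _).2 ⟨?_, fun j hj => ?_⟩).symm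
    · obtain ⟨l, hl⟩ := List.exists_mem_eraseIdx (mem_of_f1_eq_some hf) hP
      exact List.mem_ofFn.2 ⟨l, f1_eq_some_of_subset (hsub l) hf hl⟩
    · obtain ⟨l, hl⟩ := List.mem_ofFn.1 hj
      exact ((f1_eq_some_iff P k).1 hf).2 (hsub l (mem_of_f1_eq_some hl))

/-- `f1` satisfies reducibility to subsocieties (RS). -/
theorem stmt_12 (m : ℕ) (hm : 2 ≤ m) : Reducible (f1 (m := m)) :=
  stmt_12_general m
end
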